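/- arXiv:1806.01208 — 2 statements merged into one kernel-verified Lean document; each statement's English description precedes it below -/
import Mathlib

section
/- Let d be a prime and f(x) = x^d + c post-critically finite with exact type (m,n), m ≥ 1, and suppose n divides m−1. If n divides i, then (a_i)^A = (d) as ideals of O_K, where A = (d^{m−1}−1)(d−1), K = ℚ(c), a_i = f^i(0). -/
open NumberField

/-!
Write `a_j = f^[j] 0` and `b_j = a_{j+n} - a_j`. Since `x - y ∣ f x - f y`, the orbit of `0` is a
rigid divisibility sequence, and with periodicity this makes `(a_{kn}) = (a_n)` for every `k ≥ 1`.
At the end of the tail, `x = a_{m-1+n} ≠ y = a_{m-1}` have equal `d`-th powers, so `x = ζ y` for a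
primitive `d`-th root of unity `ζ`, and `(ζ - 1)^(d-1) ~ d` gives
`(b_{m-1})^(d-1) = (d)·(a_{m-1})^(d-1) = (d)·(a_n)^(d-1)`.
On the other hand `b_1 = a_n^d` and `b_{j+1} = b_j^d + d·b_j·z`, so at a prime `P` the valuations
satisfy `v(b_{j+1}) ≥ min(d·v(b_j), v(d) + v(b_j))`, with equality when the first term is smaller.
If ever `v(d) + v(b_j) ≤ d·v(b_j)`, then `v(b_{m-1}) ≥ v(d) + d·v(a_n)`, which the identity above
only allows when `v(a_n) = v(d) = 0`; otherwise `v(b_{m-1}) = d^(m-1)·v(a_n)`, and the identity reads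
`v(d) = (d^(m-1) - 1)(d - 1)·v(a_n)`.
-/

section Multiplicity

variable {α : Type*} [CommMonoidWithZero α]

section Finite

variable [IsCancelMulZero α] [WfDvdMonoid α] {p a : α} (hp : Prime p) (ha : a ≠ 0)
include hp ha

theorem multiplicity_mul_of_ne_zero {b : α} (hb : b ≠ 0) :
    multiplicity p (a * b) = multiplicity p a + multiplicity p b :=
  multiplicity_mul hp (.of_prime_left hp (mul_ne_zero ha hb))

theorem multiplicity_pow_of_ne_zero (k : ℕ) : multiplicity p (a ^ k) = k * multiplicity p a :=
  (FiniteMultiplicity.of_prime_left hp ha).multiplicity_pow hp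

theorem le_multiplicity_iff_pow_dvd {k : ℕ} : k ≤ multiplicity p a ↔ p ^ k ∣ a :=
  (FiniteMultiplicity.of_prime_left hp ha).pow_dvd_iff_le_multiplicity.symm

end Finite

theorem eq_of_forall_prime_multiplicity_eq [UniqueFactorizationMonoid α] [Subsingleton αˣ]
    {a b : α} (ha : a ≠ 0) (hb : b ≠ 0)
    (h : ∀ p, Prime p → multiplicity p a = multiplicity p b) : a = b := by
  have he : ∀ p, Prime p → emultiplicity p a = emultiplicity p b := fun p hp => by
    rw [(FiniteMultiplicity.of_prime_left hp ha).emultiplicity_eq_multiplicity,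
      (FiniteMultiplicity.of_prime_left hp hb).emultiplicity_eq_multiplicity, h p hp]
  open UniqueFactorizationMonoid in
  exact dvd_antisymm ((dvd_iff_emultiplicity_le ha).2 fun p hp => (he p hp).le)
    ((dvd_iff_emultiplicity_le hb).2 fun p hp => (he p hp).ge)

end Multiplicity

theorem eq_pow_sub_one_mul_of_min_recurrence {d N E W : ℕ} {B : ℕ → ℕ} (hd : 2 ≤ d) (hN : 1 ≤ N)
    (hB₁ : B 1 = d * E)
    (hge : ∀ j, 1 ≤ j → j < N → min (d * B j) (W + B j) ≤ B (j + 1))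
    (heq : ∀ j, 1 ≤ j → j < N → d * B j < W + B j → B (j + 1) = d * B j)
    (hBN : (d - 1) * B N = W + (d - 1) * E) :
    W = (d ^ N - 1) * (d - 1) * E := by
  -- Once `W + B j ≤ d * B j` holds it persists, and from then on `B j ≥ W + d * E`.
  have key : ∀ j, 1 ≤ j → j ≤ N →
      B j = d ^ j * E ∨ (W + d * E ≤ B j ∧ W + B j ≤ d * B j ∧ (E = 0 → W = 0)) := by
    intro j hj
    induction j, hj using Nat.le_induction with
    | base => exact fun _ => .inl (by rw [hB₁, pow_one])
    | succ j hj ih =>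
      intro hjN
      have hmin := hge j hj (by omega)
      rcases ih (by omega) with hBj | ⟨h₁, h₂, h₃⟩
      · by_cases hlt : d * B j < W + B j
        · left
          rw [heq j hj (by omega) hlt, hBj, pow_succ]
          ring
        · right
          replace hlt := not_lt.1 hlt
          rw [min_eq_right hlt] at hmin
          have hdj : d ≤ d ^ j := Nat.le_self_pow (by omega) d
          rw [hBj] at hlt hmin
          refine ⟨by nlinarith, by nlinarith, fun hE => ?_⟩
          simpa [hE] using hlt
      · right
        rw [min_eq_right h₂] at hmin
        exact ⟨by omega, by nlinarith, h₃⟩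
  rcases key N hN le_rfl with hBN' | ⟨h₁, -, h₃⟩
  · obtain ⟨e, rfl⟩ : ∃ e, d = e + 1 := ⟨d - 1, by omega⟩
    obtain ⟨t, ht⟩ : ∃ t, (e + 1) ^ N = t + 1 := ⟨_, (Nat.succ_pred_eq_of_pos (by positivity)).symm⟩
    rw [hBN', ht] at hBN
    simp only [Nat.add_sub_cancel, ht] at hBN ⊢
    nlinarith
  · obtain ⟨e, rfl⟩ : ∃ e, d = e + 2 := ⟨d - 2, by omega⟩
    have hE : E = 0 := by
      simp only [show e + 2 - 1 = e + 1 by omega] at hBN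
      nlinarith
    simp [hE, h₃ hE]

section Dedekind

open Ideal

variable {R : Type*} [CommRing R] [IsDedekindDomain R] {P : Ideal R}

omit [IsDedekindDomain R] in
theorem span_singleton_ne_zero_of_ne_zero {x : R} (hx : x ≠ 0) : span {x} ≠ 0 := by
  simpa using hx

theorem le_multiplicity_span_iff_mem (hP : Prime P) {x : R} (hx : x ≠ 0) {k : ℕ} :
    k ≤ multiplicity P (span {x}) ↔ x ∈ P ^ k := by
  rw [le_multiplicity_iff_pow_dvd hP (span_singleton_ne_zero_of_ne_zero hx), dvd_span_singleton]

theorem mem_pow_multiplicity_span (x : R) : x ∈ P ^ multiplicity P (span {x}) :=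
  dvd_span_singleton.1 (pow_multiplicity_dvd _ _)

theorem multiplicity_span_mul (hP : Prime P) {x y : R} (hx : x ≠ 0) (hy : y ≠ 0) :
    multiplicity P (span {x * y}) = multiplicity P (span {x}) + multiplicity P (span {y}) := by
  rw [← span_singleton_mul_span_singleton, multiplicity_mul_of_ne_zero hP
    (span_singleton_ne_zero_of_ne_zero hx) (span_singleton_ne_zero_of_ne_zero hy)]

theorem multiplicity_span_pow (hP : Prime P) {x : R} (hx : x ≠ 0) (k : ℕ) :
    multiplicity P (span {x ^ k}) = k * multiplicity P (span {x}) := by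
  rw [← span_singleton_pow, multiplicity_pow_of_ne_zero hP (span_singleton_ne_zero_of_ne_zero hx)]

section Recurrence

variable (hP : Prime P) {d : ℕ} {x y w z : R} (hy : y ≠ 0) (hw : w ≠ 0)
  (h : x = y ^ d + w * y * z)
include hP hy hw h

theorem min_le_multiplicity_span_of_eq_pow_add (hx : x ≠ 0) :
    min (d * multiplicity P (span {y})) (multiplicity P (span {w}) + multiplicity P (span {y}))
      ≤ multiplicity P (span {x}) := by
  have hyd : y ^ d ∈ P ^ (d * multiplicity P (span {y})) :=
    multiplicity_span_pow hP hy d ▸ mem_pow_multiplicity_span _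
  have hwy : w * y ∈ P ^ (multiplicity P (span {w}) + multiplicity P (span {y})) :=
    multiplicity_span_mul hP hw hy ▸ mem_pow_multiplicity_span _
  rw [le_multiplicity_span_iff_mem hP hx, h]
  exact add_mem (pow_le_pow_right (min_le_left _ _) hyd)
    (mul_mem_right _ _ (pow_le_pow_right (min_le_right _ _) hwy))

theorem multiplicity_span_eq_of_eq_pow_add (hx : x ≠ 0)
    (hlt : d * multiplicity P (span {y}) < multiplicity P (span {w}) + multiplicity P (span {y})) :
    multiplicity P (span {x}) = d * multiplicity P (span {y}) := by
  refine le_antisymm (not_lt.1 fun hgt => ?_)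
    (min_eq_left hlt.le ▸ min_le_multiplicity_span_of_eq_pow_add hP hy hw h hx)
  have hwy : w * y ∈ P ^ (multiplicity P (span {w}) + multiplicity P (span {y})) :=
    multiplicity_span_mul hP hw hy ▸ mem_pow_multiplicity_span _
  have hyd : y ^ d ∈ P ^ (d * multiplicity P (span {y}) + 1) := by
    rw [show y ^ d = x - w * y * z by rw [h]; ring]
    exact sub_mem ((le_multiplicity_span_iff_mem hP hx).1 hgt)
      (mul_mem_right _ _ (pow_le_pow_right hlt hwy))
  have := (le_multiplicity_span_iff_mem hP (pow_ne_zero d hy)).2 hyd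
  rw [multiplicity_span_pow hP hy] at this
  omega

end Recurrence

theorem span_pow_eq_of_pow_add_mul_recurrence {d N : ℕ} (hd : 2 ≤ d) (hN : 1 ≤ N) {α w : R}
    {b : ℕ → R} (hw : w ≠ 0) (hb : ∀ j, 1 ≤ j → j ≤ N → b j ≠ 0) (hb₁ : b 1 = α ^ d)
    (hrec : ∀ j, ∃ z, b (j + 1) = b j ^ d + w * b j * z)
    (hbN : span {b N} ^ (d - 1) = span {w} * span {α} ^ (d - 1)) :
    span {α} ^ ((d ^ N - 1) * (d - 1)) = span {w} := by
  have hα : α ≠ 0 := by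
    rintro rfl
    exact hb 1 le_rfl hN (by rw [hb₁, zero_pow (by omega)])
  have hα' := span_singleton_ne_zero_of_ne_zero hα
  have hw' := span_singleton_ne_zero_of_ne_zero hw
  refine eq_of_forall_prime_multiplicity_eq (pow_ne_zero _ hα') hw' fun P hP => ?_
  have hstar := congrArg (multiplicity P) hbN
  rw [multiplicity_pow_of_ne_zero hP (span_singleton_ne_zero_of_ne_zero (hb N hN le_rfl)),
    multiplicity_mul_of_ne_zero hP hw' (pow_ne_zero _ hα'),
    multiplicity_pow_of_ne_zero hP hα'] at hstar
  rw [multiplicity_pow_of_ne_zero hP hα']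
  refine (eq_pow_sub_one_mul_of_min_recurrence (B := fun j => multiplicity P (span {b j})) hd hN
    (by rw [hb₁, multiplicity_span_pow hP hα]) (fun j hj hjN => ?_) (fun j hj hjN => ?_)
    hstar).symm
  all_goals obtain ⟨z, hz⟩ := hrec j
  · exact min_le_multiplicity_span_of_eq_pow_add hP (hb j hj hjN.le) hw hz (hb _ (by omega) hjN)
  · exact multiplicity_span_eq_of_eq_pow_add hP (hb j hj hjN.le) hw hz (hb _ (by omega) hjN)

end Dedekind

section RootsOfUnity

variable {R : Type*} [CommRing R] [IsDomain R] {p : ℕ}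

theorem IsPrimitiveRoot.associated_sub_one_pow_prime (hp : p.Prime) {ζ : R}
    (hζ : IsPrimitiveRoot ζ p) : Associated ((ζ - 1) ^ (p - 1)) (p : R) := by
  obtain ⟨e, rfl⟩ : ∃ e, p = e + 1 := ⟨p - 1, (Nat.sub_add_cancel hp.one_le).symm⟩
  have hprod : Associated ((ζ - 1) ^ e) (∏ k ∈ Finset.range e, (ζ ^ (k + 1) - 1)) := by
    rw [← Finset.card_range e, ← Finset.prod_const, Finset.card_range]
    exact Associated.prod _ _ _ fun k hk => hζ.associated_sub_one_pow_sub_one_of_coprime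
      (Nat.coprime_of_lt_prime k.succ_ne_zero (by simpa using hk) hp).symm
  rw [Nat.add_sub_cancel, Nat.cast_succ, ← hζ.prod_pow_sub_one_eq_order]
  exact hprod.trans (associated_unit_mul_left _ _ ((isUnit_neg_one).pow e)).symm

theorem span_sub_pow_eq_of_pow_eq_pow [IsIntegrallyClosed R] (hp : p.Prime) {x y : R}
    (hxy : x ^ p = y ^ p) (hne : x ≠ y) :
    Ideal.span {x - y} ^ (p - 1) = Ideal.span {(p : R)} * Ideal.span {y} ^ (p - 1) := by
  have hy : y ≠ 0 := by
    rintro rfl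
    exact hne (pow_eq_zero_iff hp.ne_zero |>.1 (hxy.trans (zero_pow hp.ne_zero)))
  obtain ⟨ζ, rfl⟩ : y ∣ x := (IsIntegrallyClosed.pow_dvd_pow_iff hp.ne_zero).1 (hxy ▸ dvd_rfl)
  have hζ1 : ζ ≠ 1 := by rintro rfl; exact hne (mul_one y)
  have hζp : ζ ^ p = 1 :=
    mul_left_cancel₀ (pow_ne_zero p hy) (by rw [← mul_pow, hxy, mul_one])
  have : Fact p.Prime := ⟨hp⟩
  have hζ : IsPrimitiveRoot ζ p := orderOf_eq_prime hζp hζ1 ▸ IsPrimitiveRoot.orderOf ζ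
  rw [show y * ζ - y = (ζ - 1) * y by ring, ← Ideal.span_singleton_mul_span_singleton, mul_pow,
    Ideal.span_singleton_pow, Ideal.span_singleton_eq_span_singleton.2
      (hζ.associated_sub_one_pow_prime hp)]

end RootsOfUnity

section Orbit

open Function

variable {R : Type*} [CommRing R] {f : R → R} {p : ℕ}

theorem sub_dvd_iterate_sub (hf : ∀ x y, x - y ∣ f x - f y) (x y : R) (t : ℕ) :
    x - y ∣ f^[t] x - f^[t] y := by
  induction t with
  | zero => simp
  | succ t ih =>
    rw [iterate_succ_apply', iterate_succ_apply']
    exact ih.trans (hf _ _)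

theorem iterate_zero_dvd_iterate_add_sub (hf : ∀ x y, x - y ∣ f x - f y) (j t : ℕ) :
    f^[j] 0 ∣ f^[j + t] 0 - f^[t] 0 := by
  simpa [add_comm j t, iterate_add_apply] using sub_dvd_iterate_sub hf (f^[j] 0) 0 t

theorem iterate_zero_dvd_iterate_mul (hf : ∀ x y, x - y ∣ f x - f y) (j l : ℕ) :
    f^[j] 0 ∣ f^[j * l] 0 := by
  induction l with
  | zero => simp
  | succ l ih =>
    rw [mul_add_one, add_comm, ← sub_add_cancel (f^[j + j * l] 0) (f^[j * l] 0)]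
    exact dvd_add (iterate_zero_dvd_iterate_add_sub hf j (j * l)) ih

theorem span_iterate_mul_eq (hf : ∀ x y, x - y ∣ f x - f y) {m n k : ℕ}
    (hper : f^[m + n] 0 = f^[m] 0) (hk : k ≠ 0) :
    Ideal.span {f^[k * n] 0} = Ideal.span {f^[n] 0} := by
  rcases Nat.eq_zero_or_pos n with rfl | hn
  · rfl
  refine le_antisymm
    (Ideal.span_singleton_le_span_singleton.2 (mul_comm k n ▸ iterate_zero_dvd_iterate_mul hf n k))
    (Ideal.span_singleton_le_span_singleton.2 ?_)
  obtain ⟨t, ht⟩ : ∃ t, k * n * m = m + t :=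
    Nat.exists_eq_add_of_le (Nat.le_mul_of_pos_left m (by positivity))
  have hper' : f^[k * n * m + n] 0 = f^[k * n * m] 0 := by
    rw [ht, add_right_comm, add_comm, iterate_add_apply, hper, ← iterate_add_apply, add_comm]
  have hdvd := iterate_zero_dvd_iterate_add_sub hf (k * n * m) n
  rw [hper', dvd_sub_self_left] at hdvd
  exact (iterate_zero_dvd_iterate_mul hf (k * n) m).trans hdvd

theorem exists_pow_add_sub_pow_add_eq (hp : p.Prime) (c x y : R) :
    ∃ z, (x ^ p + c) - (y ^ p + c) = (x - y) ^ p + p * (x - y) * z := by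
  obtain ⟨r, hr⟩ := exists_add_pow_prime_eq hp y (x - y)
  exact ⟨y * r, by rw [add_sub_cancel] at hr; linear_combination hr⟩

end Orbit

theorem span_orbit_pow_eq_span_d_of_dvd_general {K : Type*} [Field K] [NumberField K]
    (d m n : ℕ) (hd : d.Prime) (hm : 1 ≤ m)
    (c : 𝓞 K)
    (f : 𝓞 K → 𝓞 K) (hf : f = fun x => x ^ d + c)
    (a : ℕ → 𝓞 K) (ha : ∀ i, a i = f^[i] 0)
    (hper : f^[m + n] 0 = f^[m] 0)
    (htail : ∀ k, k < m → f^[k + n] 0 ≠ f^[k] 0)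
    (hnm : n ∣ (m - 1))
    (i : ℕ) (hi : 1 ≤ i) (hni : n ∣ i) :
    (Ideal.span {a i}) ^ ((d ^ (m - 1) - 1) * (d - 1)) = Ideal.span {(d : 𝓞 K)} := by
  obtain rfl : a = fun i => f^[i] 0 := funext ha
  obtain ⟨N, rfl⟩ := Nat.exists_eq_add_of_le' hm
  obtain ⟨k, rfl⟩ := hni
  obtain ⟨q, hq⟩ := hnm
  have hf' (x : 𝓞 K) : f x = x ^ d + c := congrFun hf x
  have hf_dvd (x y : 𝓞 K) : x - y ∣ f x - f y := by simpa [hf'] using sub_dvd_pow_sub_pow x y d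
  have hxy : f^[N + n] 0 ^ d = f^[N] 0 ^ d := by
    rwa [add_right_comm, Function.iterate_succ_apply', Function.iterate_succ_apply', hf', hf',
      add_left_inj] at hper
  have hne : f^[N + n] 0 ≠ f^[N] 0 := htail N N.lt_succ_self
  have hN : N ≠ 0 := by
    rintro rfl
    rw [zero_add, Function.iterate_zero_apply, zero_pow hd.ne_zero,
      pow_eq_zero_iff hd.ne_zero] at hxy
    exact hne (by simpa using hxy)
  rw [Nat.add_sub_cancel, mul_comm] at hq
  have hq0 : q ≠ 0 := by
    rintro rfl
    exact hN (by simpa using hq)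
  have hk : k ≠ 0 := by
    rintro rfl
    simp at hi
  rw [Nat.add_sub_cancel, mul_comm n k, span_iterate_mul_eq hf_dvd hper hk]
  refine span_pow_eq_of_pow_add_mul_recurrence hd.two_le (Nat.one_le_iff_ne_zero.2 hN)
    (b := fun j => f^[j + n] 0 - f^[j] 0) (Nat.cast_ne_zero.2 hd.ne_zero)
    (fun j _ hj => sub_ne_zero.2 (htail j (by omega))) ?_ (fun j => ?_) ?_
  · simp [add_comm 1 n, Function.iterate_succ_apply', hf', zero_pow hd.ne_zero]
  · simpa only [add_right_comm j 1 n, Function.iterate_succ_apply', hf'] using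
      exists_pow_add_sub_pow_add_eq hd c (f^[j + n] 0) (f^[j] 0)
  · rw [← span_iterate_mul_eq hf_dvd hper hq0, ← hq]
    exact span_sub_pow_eq_of_pow_eq_pow hd hxy hne

/-- Let `d` be a prime and `f(x) = x^d + c` post-critically finite with
exact type `(m,n)`, `m ≥ 1`, and suppose `n ∣ m−1`. If `n ∣ i`, then
`(a_i)^A = (d)` as ideals of `𝓞 K`, where `A = (d^(m−1)−1)·(d−1)`, `K = ℚ(c)`,
`a_i = f^i(0)`. -/
theorem span_orbit_pow_eq_span_d_of_dvd {K : Type*} [Field K] [NumberField K]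
    (d m n : ℕ) (hd : d.Prime) (hm : 1 ≤ m) (hn : 1 ≤ n)
    (c : 𝓞 K)
    (hK : IntermediateField.adjoin ℚ {algebraMap (𝓞 K) K c} = ⊤)
    (f : 𝓞 K → 𝓞 K) (hf : f = fun x => x ^ d + c)
    (a : ℕ → 𝓞 K) (ha : ∀ i, a i = f^[i] 0)
    (hper : f^[m + n] 0 = f^[m] 0)
    (hmin : ∀ n', 0 < n' → n' < n → f^[m + n'] 0 ≠ f^[m] 0)
    (htail : ∀ k, k < m → f^[k + n] 0 ≠ f^[k] 0)
    (hnm : n ∣ (m - 1))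
    (i : ℕ) (hi : 1 ≤ i) (hni : n ∣ i) :
    (Ideal.span {a i}) ^ ((d ^ (m - 1) - 1) * (d - 1)) = Ideal.span {(d : 𝓞 K)} :=
  span_orbit_pow_eq_span_d_of_dvd_general d m n hd hm c f hf a ha hper htail hnm i hi hni
end

section
/- Let f(x) = x^d + c (d ≥ 2 arbitrary integer) be post-critically finite with exact type (m,n), m ≥ 1, K = ℚ(c), a_i = f^i(0). Then the ideal (a_i) divides the ideal (d) in O_K for all 1 ≤ i ≤ m+n−1. -/
open NumberField Finset IsDedekindDomain Function

/-!
Fix a height-one prime `v` of the ring of integers dividing `a_i`, and write `v` also for its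
(multiplicative) valuation. The map `x ↦ x^d + c` is `1`-Lipschitz for `v` and
`a_(j+1) - a_1 = a_j^d`, so `v (a_(j+k) - a_k) ≤ v (a_j)^d` for `k ≥ 1`. For `t` the first index
with `v ∣ a_t`, this forces `v (a_j) = v (a_t)` when `t ∣ j` and `v (a_j) = 1` otherwise; the
periodicity `a_(mt+n) = a_(mt)` then gives `t ∣ n`.
The type `(m,n)` makes `x = a_(m-1+n)` and `y = a_(m-1)` distinct with `x^d = y^d`, so
`∑ x^l y^(d-1-l) = 0`; modulo `x - y` this sum is `d y^(d-1)`. Hence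
`v d * v (a_t)^(d-1) ≤ v d * v y^(d-1) ≤ v (x - y) ≤ v (a_n)^d = v (a_t)^d`,
that is `v d ≤ v (a_t) = v (a_i)`.
-/

namespace Valuation

variable {R Γ : Type*} [CommRing R] [LinearOrderedCommGroupWithZero Γ] (v : Valuation R Γ)

theorem map_pow_sub_pow_le (hv : ∀ x, v x ≤ 1) (x y : R) (n : ℕ) :
    v (x ^ n - y ^ n) ≤ v (x - y) := by
  rw [← geom_sum₂_mul, v.map_mul]
  exact mul_le_of_le_one_left' (hv _)

theorem map_natCast_mul_pow_le_of_pow_eq_pow [NoZeroDivisors R] (hv : ∀ x, v x ≤ 1)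
    {x y : R} {d : ℕ} (hxy : x ≠ y) (h : x ^ d = y ^ d) :
    v d * v y ^ (d - 1) ≤ v (x - y) := by
  have hsum : ∑ l ∈ range d, x ^ l * y ^ (d - 1 - l) = 0 := by
    have hprod := geom_sum₂_mul x y d
    rw [h, sub_self] at hprod
    exact (mul_eq_zero.mp hprod).resolve_right (sub_ne_zero.mpr hxy)
  have hdiff : (d : R) * y ^ (d - 1) = -∑ l ∈ range d, (x ^ l - y ^ l) * y ^ (d - 1 - l) := by
    simp_rw [sub_mul]
    rw [sum_sub_distrib, hsum, geom_sum₂_self, zero_sub, neg_neg]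
  rw [← map_pow, ← map_mul, hdiff, map_neg]
  refine v.map_sum_le fun l _ ↦ ?_
  rw [v.map_mul]
  exact (mul_le_of_le_one_right' (hv _)).trans (v.map_pow_sub_pow_le hv x y l)

end Valuation

theorem IsDedekindDomain.dvd_of_forall_intValuation_le {R : Type*} [CommRing R]
    [IsDedekindDomain R] {x y : R} (hx : x ≠ 0)
    (h : ∀ v : HeightOneSpectrum R, v.intValuation y ≤ v.intValuation x) : x ∣ y := by
  have hx' : Ideal.span {x} ≠ 0 := by simpa using hx
  rw [← Ideal.mem_span_singleton, ← Ideal.dvd_span_singleton,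
    UniqueFactorizationMonoid.dvd_iff_emultiplicity_le hx']
  intro P hP
  have hv := h ⟨P, Ideal.isPrime_of_prime hP, hP.ne_zero⟩
  rw [HeightOneSpectrum.intValuation_eq_exp_neg_multiplicity _ hx,
    HeightOneSpectrum.intValuation_le_exp_iff_le_emultiplicity] at hv
  rwa [(FiniteMultiplicity.of_prime_left hP hx').emultiplicity_eq_multiplicity]

def critOrbit {R : Type*} [Semiring R] (d : ℕ) (c : R) (k : ℕ) : R :=
  (fun x ↦ x ^ d + c)^[k] 0

section CommRing

variable {R : Type*} [CommRing R] {d : ℕ} {c : R}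

@[simp]
theorem critOrbit_zero : critOrbit d c 0 = 0 := rfl

theorem critOrbit_succ (k : ℕ) : critOrbit d c (k + 1) = critOrbit d c k ^ d + c :=
  iterate_succ_apply' _ k 0

theorem critOrbit_add_eq_of_le {m n j : ℕ} (hper : critOrbit d c (m + n) = critOrbit d c m)
    (hj : m ≤ j) :
    critOrbit d c (j + n) = critOrbit d c j := by
  obtain ⟨k, rfl⟩ := Nat.exists_eq_add_of_le hj
  clear hj
  induction k with
  | zero => exact hper
  | succ k ih => rw [← add_assoc, add_right_comm, critOrbit_succ, critOrbit_succ, ih]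

theorem critOrbit_ne_zero {m n j : ℕ} (hper : critOrbit d c (m + n) = critOrbit d c m)
    (hn : critOrbit d c n ≠ 0) (hj : 1 ≤ j) : critOrbit d c j ≠ 0 := by
  have hperiodic : IsPeriodicPt (fun x : R ↦ x ^ d + c) n (critOrbit d c m) := by
    rw [IsPeriodicPt, IsFixedPt, critOrbit, ← iterate_add_apply, add_comm]
    exact hper
  exact fun h ↦ hn (isPeriodicPt_of_mem_periodicPts_of_isPeriodicPt_iterate
    (mk_mem_periodicPts hj h) hperiodic)

theorem critOrbit_pow_eq_pow_of_succ_add_eq {p n : ℕ}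
    (h : critOrbit d c (p + 1 + n) = critOrbit d c (p + 1)) :
    critOrbit d c (p + n) ^ d = critOrbit d c p ^ d := by
  rwa [add_right_comm, critOrbit_succ, critOrbit_succ, add_left_inj] at h

theorem critOrbit_one_add_ne_one [NoZeroDivisors R] (hd : d ≠ 0) {n : ℕ}
    (hn : critOrbit d c n ≠ 0) :
    critOrbit d c (1 + n) ≠ critOrbit d c 1 := by
  intro h
  have hpow := critOrbit_pow_eq_pow_of_succ_add_eq (p := 0) h
  rw [zero_add, critOrbit_zero, zero_pow hd] at hpow
  exact hn ((pow_eq_zero_iff hd).mp hpow)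

variable {Γ : Type*} [LinearOrderedCommGroupWithZero Γ] (v : Valuation R Γ)

theorem valuation_critOrbit_add_sub_le (hv : ∀ x, v x ≤ 1) (hd : d ≠ 0) (j : ℕ) {k : ℕ}
    (hk : 1 ≤ k) :
    v (critOrbit d c (j + k) - critOrbit d c k) ≤ v (critOrbit d c j) ^ d := by
  induction k, hk using Nat.le_induction with
  | base =>
    rw [critOrbit_succ, critOrbit_succ, critOrbit_zero, zero_pow hd, add_sub_add_right_eq_sub,
      sub_zero, map_pow]
  | succ k _ ih =>
    rw [← add_assoc, critOrbit_succ, critOrbit_succ, add_sub_add_right_eq_sub]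
    exact (v.map_pow_sub_pow_le hv _ _ d).trans ih

theorem valuation_critOrbit_add_eq (hv : ∀ x, v x ≤ 1) (hd : d ≠ 0) (t : ℕ) {k : ℕ}
    (hk : 1 ≤ k)
    (h : v (critOrbit d c t) ^ d < v (critOrbit d c k)) :
    v (critOrbit d c (t + k)) = v (critOrbit d c k) :=
  v.map_eq_of_sub_lt ((valuation_critOrbit_add_sub_le v hv hd t hk).trans_lt h)

theorem valuation_critOrbit_eq_ite (hv : ∀ x, v x ≤ 1) (hd : 2 ≤ d) {t : ℕ}
    (ht₀ : v (critOrbit d c t) ≠ 0) (ht₁ : v (critOrbit d c t) < 1)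
    (hmin : ∀ j, 1 ≤ j → j < t → v (critOrbit d c j) = 1) {j : ℕ} (hj : 1 ≤ j) :
    v (critOrbit d c j) = if t ∣ j then v (critOrbit d c t) else 1 := by
  have ht : 1 ≤ t := Nat.one_le_iff_ne_zero.mpr fun h ↦ ht₀ (by simp [h])
  have hpow : v (critOrbit d c t) ^ d < v (critOrbit d c t) :=
    pow_lt_self_of_lt_one₀ (zero_lt_iff.mpr ht₀) ht₁ hd
  induction j using Nat.strong_induction_on with
  | _ j ih =>
  rcases lt_trichotomy j t with hjt | rfl | htj
  · rw [hmin j hj hjt, if_neg (Nat.not_dvd_of_pos_of_lt hj hjt)]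
  · rw [if_pos dvd_rfl]
  · obtain ⟨k, rfl⟩ := Nat.exists_eq_add_of_lt htj
    have hk : 1 ≤ k + 1 := by omega
    have hlow : v (critOrbit d c t) ≤ v (critOrbit d c (k + 1)) := by
      rw [ih (k + 1) (by omega) hk]
      split_ifs
      exacts [le_rfl, ht₁.le]
    rw [add_assoc, valuation_critOrbit_add_eq v hv (by omega) t hk (hpow.trans_le hlow),
      ih (k + 1) (by omega) hk]
    simp only [Nat.dvd_add_self_left]

theorem dvd_of_valuation_critOrbit_eq_ite {E : Γ} (hE : E ≠ 1) {t m n : ℕ} (ht : 1 ≤ t)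
    (hper : critOrbit d c (m + n) = critOrbit d c m)
    (hval : ∀ j ≥ 1, v (critOrbit d c j) = if t ∣ j then E else 1) : t ∣ n := by
  have hmt : 1 ≤ (m + 1) * t := Nat.one_le_iff_ne_zero.mpr (by positivity)
  have h := hval ((m + 1) * t + n) (Nat.le_add_right_of_le hmt)
  rw [critOrbit_add_eq_of_le hper ((Nat.le_succ m).trans (Nat.le_mul_of_pos_right _ ht)),
    hval _ hmt, if_pos (dvd_mul_left t _)] at h
  split_ifs at h with htn
  · exact (Nat.dvd_add_right (dvd_mul_left t _)).mp htn
  · exact absurd h hE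

end CommRing

section IsDedekindDomain

variable {R : Type*} [CommRing R] [IsDedekindDomain R] {d : ℕ} {c : R} (v : HeightOneSpectrum R)

theorem exists_intValuation_critOrbit_eq_ite (hd : 2 ≤ d) {m n i : ℕ}
    (hper : critOrbit d c (m + n) = critOrbit d c m) (hn : critOrbit d c n ≠ 0) (hi : 1 ≤ i)
    (hlt : v.intValuation (critOrbit d c i) < 1) :
    ∃ t ≥ 1, ∀ j ≥ 1, v.intValuation (critOrbit d c j) =
      if t ∣ j then v.intValuation (critOrbit d c i) else 1 := by
  have hex : ∃ t, 1 ≤ t ∧ v.intValuation (critOrbit d c t) < 1 := ⟨i, hi, hlt⟩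
  obtain ⟨ht, ht₁⟩ := Nat.find_spec hex
  have ht₀ := v.intValuation_ne_zero _ (critOrbit_ne_zero hper hn ht)
  have hmin (j : ℕ) (hj : 1 ≤ j) (hjt : j < Nat.find hex) :
      v.intValuation (critOrbit d c j) = 1 :=
    (v.intValuation_le_one _).antisymm (not_lt.mp fun h ↦ Nat.find_min hex hjt ⟨hj, h⟩)
  have hval {j : ℕ} (hj : 1 ≤ j) :=
    valuation_critOrbit_eq_ite v.intValuation v.intValuation_le_one hd ht₀ ht₁ hmin hj
  have hti : Nat.find hex ∣ i := by
    by_contra hti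
    rw [hval hi, if_neg hti] at hlt
    exact lt_irrefl _ hlt
  refine ⟨Nat.find hex, ht, fun j hj ↦ ?_⟩
  rw [hval hj, hval hi, if_pos hti]

theorem intValuation_natCast_le_critOrbit (hd : 2 ≤ d) {m n i : ℕ} (hm : 1 ≤ m)
    (hper : critOrbit d c (m + n) = critOrbit d c m)
    (htail : ∀ k, k < m → critOrbit d c (k + n) ≠ critOrbit d c k) (hi : 1 ≤ i) :
    v.intValuation d ≤ v.intValuation (critOrbit d c i) := by
  have hd₀ : d ≠ 0 := by omega
  set V := v.intValuation
  obtain h | h := (v.intValuation_le_one (critOrbit d c i)).eq_or_lt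
  · exact h ▸ v.intValuation_le_one _
  have hn₀ : critOrbit d c n ≠ 0 := by simpa using htail 0 hm
  have hn : 1 ≤ n := Nat.one_le_iff_ne_zero.mpr fun h ↦ hn₀ (by simp [h])
  obtain ⟨t, ht, hval⟩ := exists_intValuation_critOrbit_eq_ite v hd hper hn₀ hi h
  set E := V (critOrbit d c i)
  have htn : t ∣ n := dvd_of_valuation_critOrbit_eq_ite V h.ne ht hper hval
  obtain ⟨p, rfl⟩ : ∃ p, m = p + 1 := ⟨m - 1, by omega⟩
  have hp : 1 ≤ p := Nat.one_le_iff_ne_zero.mpr fun hp₀ ↦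
    critOrbit_one_add_ne_one hd₀ hn₀ (by simpa [hp₀] using hper)
  have hE₀ : E ≠ 0 := v.intValuation_ne_zero _ (critOrbit_ne_zero hper hn₀ hi)
  have hy : E ≤ V (critOrbit d c p) := by
    rw [hval p hp]
    split_ifs
    exacts [le_rfl, h.le]
  have hxy := V.map_natCast_mul_pow_le_of_pow_eq_pow v.intValuation_le_one
    (htail p (by omega)) (critOrbit_pow_eq_pow_of_succ_add_eq hper)
  have hdiff : V (critOrbit d c (p + n) - critOrbit d c p) ≤ E ^ d := by
    have hE : V (critOrbit d c n) = E := by rw [hval n hn, if_pos htn]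
    rw [add_comm p n, ← hE]
    exact valuation_critOrbit_add_sub_le V v.intValuation_le_one hd₀ n hp
  rw [← mul_le_mul_iff_left₀ (pow_pos (zero_lt_iff.mpr hE₀) (d - 1)), ← pow_succ',
    Nat.sub_add_cancel (by omega)]
  calc V d * E ^ (d - 1) ≤ V d * V (critOrbit d c p) ^ (d - 1) := by gcongr
    _ ≤ E ^ d := hxy.trans hdiff

theorem critOrbit_dvd_natCast (hd : 2 ≤ d) {m n i : ℕ} (hm : 1 ≤ m)
    (hper : critOrbit d c (m + n) = critOrbit d c m)
    (htail : ∀ k, k < m → critOrbit d c (k + n) ≠ critOrbit d c k) (hi : 1 ≤ i) :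
    critOrbit d c i ∣ d :=
  dvd_of_forall_intValuation_le (critOrbit_ne_zero hper (by simpa using htail 0 hm) hi)
    fun v ↦ intValuation_natCast_le_critOrbit v hd hm hper htail hi

end IsDedekindDomain

theorem span_orbit_dvd_span_d_general {K : Type*} [Field K] [NumberField K]
    (d m n : ℕ) (hd : 2 ≤ d) (hm : 1 ≤ m)
    (c : 𝓞 K)
    (f : 𝓞 K → 𝓞 K) (hf : f = fun x => x ^ d + c)
    (a : ℕ → 𝓞 K) (ha : ∀ i, a i = f^[i] 0)
    (hper : f^[m + n] 0 = f^[m] 0)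
    (htail : ∀ k, k < m → f^[k + n] 0 ≠ f^[k] 0)
    (i : ℕ) (hi : 1 ≤ i) :
    Ideal.span {a i} ∣ Ideal.span {(d : 𝓞 K)} := by
  subst hf
  rw [ha, Ideal.dvd_span_singleton, Ideal.mem_span_singleton]
  exact critOrbit_dvd_natCast hd hm hper htail hi

/-- Let `f(x) = x^d + c` (`d ≥ 2` arbitrary) be post-critically finite
with exact type `(m,n)`, `m ≥ 1`, `K = ℚ(c)`, `a_i = f^i(0)`. Then the ideal `(a_i)`
divides the ideal `(d)` in `𝓞 K` for all `1 ≤ i ≤ m+n−1`. -/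
theorem span_orbit_dvd_span_d {K : Type*} [Field K] [NumberField K]
    (d m n : ℕ) (hd : 2 ≤ d) (hm : 1 ≤ m) (hn : 1 ≤ n)
    (c : 𝓞 K)
    (hK : IntermediateField.adjoin ℚ {algebraMap (𝓞 K) K c} = ⊤)
    (f : 𝓞 K → 𝓞 K) (hf : f = fun x => x ^ d + c)
    (a : ℕ → 𝓞 K) (ha : ∀ i, a i = f^[i] 0)
    (hper : f^[m + n] 0 = f^[m] 0)
    (hmin : ∀ n', 0 < n' → n' < n → f^[m + n'] 0 ≠ f^[m] 0)
    (htail : ∀ k, k < m → f^[k + n] 0 ≠ f^[k] 0)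
    (i : ℕ) (hi : 1 ≤ i) (him : i ≤ m + n - 1) :
    Ideal.span {a i} ∣ Ideal.span {(d : 𝓞 K)} :=
  span_orbit_dvd_span_d_general d m n hd hm c f hf a ha hper htail i hi
end
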